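/- Let 1 ≤ p, q ≤ ∞. If f ∈ L^{p,q}(R × R^d) and g ∈ 𝓛^{∞,∞}(R × R^d), then the sequence of inner products c(j₁,j₂) = ∫_R ∫_{R^d} f(x₁,x₂) g(x₁−j₁, x₂−j₂) dx₁ dx₂ belongs to ℓ^{p,q}(Z × Z^d) and ‖c‖_{ℓ^{p,q}} ≤ ‖f‖_{L^{p,q}} ‖g‖_{𝓛^{∞,∞}}. -/

import Mathlib

open MeasureTheory ENNReal Filter

noncomputable section

abbrev Zd (d : ℕ) := Fin d → ℤ
abbrev Rd (d : ℕ) := Fin d → ℝ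

/-- coercion of an integer lattice point to `ℝ^d` -/
def zcast {d : ℕ} (j : Zd d) : Rd d := fun i => (j i : ℝ)

/-- the `L^p` "norm" (valued in `ℝ≥0∞`) of an `ℝ≥0∞`-valued function w.r.t. a measure -/
def mnorm (p : ℝ≥0∞) {α : Type*} [MeasurableSpace α] (μ : Measure α) (g : α → ℝ≥0∞) : ℝ≥0∞ :=
  if p = ∞ then essSup g μ else (∫⁻ x, g x ^ p.toReal ∂μ) ^ (1 / p.toReal)

/-- the `ℓ^p` "norm" of an `ℝ≥0∞`-valued sequence -/
def dnorm (p : ℝ≥0∞) {ι : Type*} (c : ι → ℝ≥0∞) : ℝ≥0∞ :=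
  if p = ∞ then ⨆ i, c i else (∑' i, c i ^ p.toReal) ^ (1 / p.toReal)

/-- the mixed Lebesgue norm `‖ ‖f(x₁,·)‖_{L^q(ℝ^d)} ‖_{L^p(ℝ)}` -/
def mixedLpq {d : ℕ} (p q : ℝ≥0∞) (f : ℝ × Rd d → ℂ) : ℝ≥0∞ :=
  mnorm p volume (fun x₁ => mnorm q volume (fun x₂ => (‖f (x₁, x₂)‖₊ : ℝ≥0∞)))

/-- the mixed sequence norm `ℓ^{p,q}(ℤ × ℤ^d)` -/
def lpq {d : ℕ} (p q : ℝ≥0∞) (D : ℤ × Zd d → ℂ) : ℝ≥0∞ :=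
  dnorm p (fun j₁ : ℤ => dnorm q (fun j₂ : Zd d => (‖D (j₁, j₂)‖₊ : ℝ≥0∞)))

def cube (d : ℕ) : Set (Rd d) := Set.Icc 0 1

/-- the amalgam norm `𝓛^{p,q}` -/
def amal {d : ℕ} (p q : ℝ≥0∞) (f : ℝ × Rd d → ℂ) : ℝ≥0∞ :=
  mnorm p (volume.restrict (Set.Icc (0:ℝ) 1)) (fun x₁ =>
    ∑' j₁ : ℤ, mnorm q (volume.restrict (cube d)) (fun x₂ =>
      ∑' j₂ : Zd d, (‖f (x₁ + (j₁:ℝ), x₂ + zcast j₂)‖₊ : ℝ≥0∞)))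

/-- the Wiener amalgam norm `W(L^{1,1})` -/
def wiener {d : ℕ} (f : ℝ × Rd d → ℂ) : ℝ≥0∞ :=
  ∑' j₁ : ℤ, ⨆ x₁ : Set.Icc (0:ℝ) 1, ∑' j₂ : Zd d, ⨆ x₂ : cube d,
    (‖f ((x₁:ℝ) + (j₁:ℝ), (x₂:Rd d) + zcast j₂)‖₊ : ℝ≥0∞)

/-- the semi-convolution `f ∗' D` -/
def semiConv {d : ℕ} (f : ℝ × Rd d → ℂ) (D : ℤ × Zd d → ℂ) : ℝ × Rd d → ℂ :=
  fun x => ∑' j : ℤ × Zd d, D j * f (x.1 - (j.1:ℝ), x.2 - zcast j.2)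

/-!
Both variables are handled by one sampling inequality. Let a lattice act by translations on a
group with an invariant measure and a fundamental domain `B` of measure one, and let the
periodization `∑ₖ ψ(u + k)` be at most `A` on `B`. Then `∫ ψ ≤ A` and `∑ⱼ ψ(x - j) ≤ A` almost
everywhere, so summing over `j` the weighted Hölder inequality
`(∫ φ ψ(· - j))^r ≤ (∫ φ^r ψ(· - j)) (∫ ψ)^(r-1)` gives
`‖(∫ φ ψ(· - j))ⱼ‖_{ℓ^r} ≤ A ‖φ‖_{L^r}`.
This is applied in `x₂ ∈ ℝ^d` for fixed `x₁`, after Minkowski's integral inequality has moved the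
`ℓ^q` norm inside the `x₁`-integral, and then in `x₁ ∈ ℝ`; the essential suprema in the amalgam
norm are the bounds `A`.
-/

lemma mnorm_top {α : Type*} [MeasurableSpace α] (μ : Measure α) (g : α → ℝ≥0∞) :
    mnorm ∞ μ g = essSup g μ := if_pos rfl

lemma dnorm_mono {p : ℝ≥0∞} {ι : Type*} {c c' : ι → ℝ≥0∞} (h : ∀ i, c i ≤ c' i) :
    dnorm p c ≤ dnorm p c' := by
  unfold dnorm
  split_ifs
  · exact iSup_mono h
  · gcongr with i
    exact h i

lemma Measurable.essSup_prod_right {X Y : Type*} [MeasurableSpace X] [MeasurableSpace Y]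
    {ν : Measure Y} [SFinite ν] {S : X × Y → ℝ≥0∞} (hS : Measurable S) :
    Measurable fun x => essSup (fun y => S (x, y)) ν := by
  refine measurable_of_Iic fun a => ?_
  have hpre : (fun x => essSup (fun y => S (x, y)) ν) ⁻¹' Set.Iic a
      = (fun x => ν (Prod.mk x ⁻¹' {z | a < S z})) ⁻¹' {0} := by
    ext x
    have hiff : essSup (fun y => S (x, y)) ν ≤ a ↔ ∀ᵐ y ∂ν, S (x, y) ≤ a :=
      ⟨fun h => (ENNReal.ae_le_essSup _).mono fun y hy => hy.trans h, essSup_le_of_ae_le a⟩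
    simp only [Set.mem_preimage, Set.mem_Iic, Set.mem_singleton_iff]
    rw [hiff, ae_iff]
    simp only [not_le]
    rfl
  rw [hpre]
  exact measurable_measure_prodMk_left (measurableSet_lt measurable_const hS)
    (measurableSet_singleton 0)

lemma Measurable.mnorm_prod_right {X Y : Type*} [MeasurableSpace X] [MeasurableSpace Y]
    {ν : Measure Y} [SFinite ν] {S : X × Y → ℝ≥0∞} (hS : Measurable S) (q : ℝ≥0∞) :
    Measurable fun x => mnorm q ν (fun y => S (x, y)) := by
  unfold mnorm
  split_ifs
  · exact hS.essSup_prod_right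
  · exact ((hS.pow_const _).lintegral_prod_right').pow_const _

lemma lintegral_mul_rpow_le {X : Type*} [MeasurableSpace X] {μ : Measure X} {φ ψ : X → ℝ≥0∞}
    (hφ : AEMeasurable φ μ) (hψ : AEMeasurable ψ μ) {r : ℝ} (hr : 1 ≤ r) :
    (∫⁻ x, φ x * ψ x ∂μ) ^ r ≤ (∫⁻ x, φ x ^ r * ψ x ∂μ) * (∫⁻ x, ψ x ∂μ) ^ (r - 1) := by
  have hr0 : r ≠ 0 := by positivity
  have hr' : 0 ≤ 1 - 1 / r := sub_nonneg.2 ((div_le_one (by positivity)).2 hr)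
  have hholder := ENNReal.lintegral_mul_norm_pow_le (f := fun x => φ x ^ r * ψ x)
    ((hφ.pow_const r).mul hψ) hψ (p := 1 / r) (by positivity) hr' (add_sub_cancel _ _)
  have hsplit : ∀ x, (φ x ^ r * ψ x) ^ (1 / r) * ψ x ^ (1 - 1 / r) = φ x * ψ x := fun x => by
    rw [ENNReal.mul_rpow_of_nonneg _ _ (by positivity), ← ENNReal.rpow_mul, mul_one_div_cancel hr0,
      ENNReal.rpow_one, mul_assoc, ← ENNReal.rpow_add_of_nonneg _ _ (by positivity) hr',
      add_sub_cancel, ENNReal.rpow_one]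
  simp only [hsplit] at hholder
  calc (∫⁻ x, φ x * ψ x ∂μ) ^ r
      ≤ ((∫⁻ x, φ x ^ r * ψ x ∂μ) ^ (1 / r) * (∫⁻ x, ψ x ∂μ) ^ (1 - 1 / r)) ^ r := by gcongr
    _ = (∫⁻ x, φ x ^ r * ψ x ∂μ) * (∫⁻ x, ψ x ∂μ) ^ (r - 1) := by
      rw [ENNReal.mul_rpow_of_nonneg _ _ (by positivity), ← ENNReal.rpow_mul, ← ENNReal.rpow_mul,
        one_div_mul_cancel hr0, ENNReal.rpow_one, sub_mul, one_mul, one_div_mul_cancel hr0]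

lemma dnorm_lintegral_le_lintegral_dnorm {ι X : Type*} [Countable ι] [MeasurableSpace X]
    {μ : Measure X} {q : ℝ≥0∞} (hq : 1 ≤ q) {F : X → ι → ℝ≥0∞}
    (hF : ∀ j, Measurable fun x => F x j) :
    dnorm q (fun j => ∫⁻ x, F x j ∂μ) ≤ ∫⁻ x, dnorm q (F x) ∂μ := by
  unfold dnorm
  split_ifs with hq_top
  · exact iSup_le fun j => lintegral_mono fun x => le_iSup (F x) j
  set r := q.toReal
  have hr : 1 ≤ r := by simpa using ENNReal.toReal_mono hq_top hq
  rcases hr.eq_or_lt with hr1 | hr1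
  · simp only [← hr1, ENNReal.rpow_one, div_one]
    exact (lintegral_tsum fun j => (hF j).aemeasurable).symm.le
  have hrr' := Real.HolderConjugate.conjExponent hr1
  set r' := r.conjExponent
  have hr' : 0 ≤ 1 / r' := (one_div_pos.2 hrr'.symm.pos).le
  set R := ∫⁻ x, (∑' j, F x j ^ r) ^ (1 / r) ∂μ
  rcases eq_or_ne R ∞ with hR | hR
  · exact hR ▸ le_top
  set I := fun j => ∫⁻ x, F x j ∂μ
  have hI : ∀ j, I j ≤ R := fun j => lintegral_mono fun x => calc
    F x j = (F x j ^ r) ^ (1 / r) := by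
      rw [← ENNReal.rpow_mul, mul_one_div_cancel (by positivity), ENNReal.rpow_one]
    _ ≤ (∑' k, F x k ^ r) ^ (1 / r) := by gcongr; exact ENNReal.le_tsum j
  -- the cancellation of `T ^ (1 / r')` below needs `T < ∞`, hence finite sums and `R < ∞`
  have hpartial : ∀ s : Finset ι, ∑ j ∈ s, I j ^ r ≤ R ^ r := by
    intro s
    set T := ∑ j ∈ s, I j ^ r
    have hT : T ≠ ∞ := ENNReal.sum_ne_top.2 fun j _ =>
      ENNReal.rpow_ne_top_of_nonneg (by positivity) ((hI j).trans_lt hR.lt_top).ne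
    rcases eq_or_ne T 0 with hT0 | hT0
    · exact hT0 ▸ zero_le
    have hstep : T ≤ T ^ (1 / r') * R := calc
      T = ∑ j ∈ s, I j ^ (r - 1) * I j := by
        refine Finset.sum_congr rfl fun j _ => ?_
        conv_lhs => rw [← sub_add_cancel r 1,
          ENNReal.rpow_add_of_nonneg _ _ (by linarith) zero_le_one, ENNReal.rpow_one]
      _ = ∫⁻ x, ∑ j ∈ s, I j ^ (r - 1) * F x j ∂μ := by
        rw [lintegral_finsetSum _ fun j _ => (hF j).const_mul _]
        exact Finset.sum_congr rfl fun j _ => (lintegral_const_mul _ (hF j)).symm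
      _ ≤ ∫⁻ x, T ^ (1 / r') * (∑ j ∈ s, F x j ^ r) ^ (1 / r) ∂μ := by
        refine lintegral_mono fun x => (ENNReal.inner_le_Lp_mul_Lq s _ _ hrr'.symm).trans_eq ?_
        simp only [← ENNReal.rpow_mul, hrr'.sub_one_mul_conj, T]
      _ ≤ T ^ (1 / r') * R := by
        rw [lintegral_const_mul' _ _ (ENNReal.rpow_ne_top_of_nonneg hr' hT)]
        gcongr
        refine lintegral_mono fun x => ?_
        gcongr
        exact ENNReal.sum_le_tsum s
    have hsplit : T ^ (1 / r') * T ^ (1 / r) = T := by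
      rw [← ENNReal.rpow_add_of_nonneg _ _ hr' (by positivity),
        hrr'.symm.one_div_add_one_div, div_one, ENNReal.rpow_one]
    rw [← ENNReal.rpow_inv_le_iff (by positivity), ← one_div]
    refine (ENNReal.mul_le_mul_iff_right (a := T ^ (1 / r')) ?_ ?_).1 (hsplit.trans_le hstep)
    · exact (ENNReal.rpow_pos (pos_iff_ne_zero.2 hT0) hT).ne'
    · exact ENNReal.rpow_ne_top_of_nonneg hr' hT
  rw [one_div, ENNReal.rpow_inv_le_iff (by positivity), ENNReal.tsum_eq_iSup_sum]
  exact iSup_le hpartial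

section Lattice

variable {α L : Type*} [MeasurableSpace α] [AddCommGroup α] [MeasurableAdd α]
  {μ : Measure α} [μ.IsAddRightInvariant] [Countable L] {B : Set α}

lemma lintegral_eq_tsum_setLIntegral_add {e : L → α} (hB : MeasurableSet B)
    (hcover : ∀ x, ∃! k, x - e k ∈ B) (h : α → ℝ≥0∞) :
    ∫⁻ x, h x ∂μ = ∑' k, ∫⁻ u in B, h (u + e k) ∂μ := by
  have htranslate : ∀ k, ∫⁻ x in (· - e k) ⁻¹' B, h x ∂μ = ∫⁻ u in B, h (u + e k) ∂μ := fun k => by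
    simpa only [sub_add_cancel] using
      (measurePreserving_sub_right μ (e k)).setLIntegral_comp_preimage_emb
        (measurableEmbedding_subRight (e k)) (fun u => h (u + e k)) B
  have hcovers : ⋃ k, (· - e k) ⁻¹' B = Set.univ :=
    Set.eq_univ_of_forall fun x => Set.mem_iUnion.2 (hcover x).exists
  have hdisjoint : Pairwise (Function.onFun Disjoint fun k => (· - e k) ⁻¹' B) :=
    fun k k' hne => Set.disjoint_left.2 fun x hk hk' => hne ((hcover x).unique hk hk')
  rw [← setLIntegral_univ, ← hcovers,
    lintegral_iUnion (fun k => (measurableEmbedding_subRight (e k)).measurable hB) hdisjoint]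
  exact tsum_congr htranslate

variable [AddGroup L] {e : L →+ α} {ψ : α → ℝ≥0∞} {A : ℝ≥0∞}

lemma ae_tsum_add_le_of_ae_restrict (hB : MeasurableSet B) (hcover : ∀ x, ∃ k, x - e k ∈ B)
    (hA : ∀ᵐ u ∂μ.restrict B, ∑' k, ψ (u + e k) ≤ A) :
    ∀ᵐ x ∂μ, ∑' k, ψ (x + e k) ≤ A := by
  set P : α → ℝ≥0∞ := fun x => ∑' k, ψ (x + e k)
  have hperiodic : ∀ x m, P (x - e m) = P x := fun x m => by
    simp only [P, sub_add_eq_add_sub, add_sub_assoc, ← map_sub]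
    exact (Equiv.subRight m).tsum_eq fun k => ψ (x + e k)
  set N := {u | u ∈ B ∧ A < P u}
  have hN : μ N = 0 := by
    rw [ae_restrict_iff' hB, ae_iff] at hA
    simpa only [N, Classical.not_imp, not_le] using hA
  -- `P` is periodic, so a point where `P > A` is a lattice translate of such a point of `B`
  rw [ae_iff]
  refine measure_mono_null (fun x hx => ?_) (measure_iUnion_null fun m =>
    (measure_preimage_add_right μ (-e m) N).trans hN)
  obtain ⟨m, hm⟩ := hcover x
  refine Set.mem_iUnion.2 ⟨m, ?_⟩
  simp only [Set.mem_preimage, ← sub_eq_add_neg]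
  exact ⟨hm, (hperiodic x m).symm ▸ not_le.1 hx⟩

lemma lintegral_le_of_ae_restrict_tsum_add_le (hB : MeasurableSet B) (hB1 : μ B = 1)
    (hcover : ∀ x, ∃! k, x - e k ∈ B) (hψ : Measurable ψ)
    (hA : ∀ᵐ u ∂μ.restrict B, ∑' k, ψ (u + e k) ≤ A) :
    ∫⁻ x, ψ x ∂μ ≤ A := calc
  ∫⁻ x, ψ x ∂μ = ∫⁻ u in B, ∑' k, ψ (u + e k) ∂μ := by
    rw [lintegral_eq_tsum_setLIntegral_add hB hcover,
      lintegral_tsum (f := fun k u => ψ (u + e k))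
        fun k => (hψ.comp (measurable_add_const (e k))).aemeasurable]
  _ ≤ ∫⁻ _ in B, A ∂μ := lintegral_mono_ae hA
  _ = A := by rw [setLIntegral_const, hB1, mul_one]

theorem dnorm_lintegral_mul_sub_le (hB : MeasurableSet B) (hB1 : μ B = 1)
    (hcover : ∀ x, ∃! k, x - e k ∈ B) {q : ℝ≥0∞} (hq : 1 ≤ q) {φ : α → ℝ≥0∞}
    (hφ : Measurable φ) (hψ : Measurable ψ) (hA : ∀ᵐ u ∂μ.restrict B, ∑' k, ψ (u + e k) ≤ A) :
    dnorm q (fun j => ∫⁻ x, φ x * ψ (x - e j) ∂μ) ≤ mnorm q μ φ * A := by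
  have hψA : ∫⁻ x, ψ x ∂μ ≤ A := lintegral_le_of_ae_restrict_tsum_add_le hB hB1 hcover hψ hA
  have hψj : ∀ j, Measurable fun x => ψ (x - e j) := fun j =>
    hψ.comp (measurableEmbedding_subRight _).measurable
  unfold dnorm mnorm
  split_ifs with hq_top
  · refine iSup_le fun j => ?_
    calc ∫⁻ x, φ x * ψ (x - e j) ∂μ ≤ ∫⁻ x, essSup φ μ * ψ (x - e j) ∂μ :=
          lintegral_mono_ae ((ENNReal.ae_le_essSup φ).mono fun x hx => by gcongr)
      _ = essSup φ μ * ∫⁻ x, ψ x ∂μ := by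
          rw [lintegral_const_mul _ (hψj j), lintegral_sub_right_eq_self]
      _ ≤ essSup φ μ * A := by gcongr
  set r := q.toReal
  have hr : 1 ≤ r := by simpa using ENNReal.toReal_mono hq_top hq
  have hr0 : 0 < r := by positivity
  have hsum_le : ∀ᵐ x ∂μ, ∑' j, ψ (x - e j) ≤ A := by
    filter_upwards [ae_tsum_add_le_of_ae_restrict hB (fun x => (hcover x).exists) hA] with x hx
    rw [← (Equiv.neg L).tsum_eq]
    simpa only [Equiv.neg_apply, map_neg, sub_neg_eq_add] using hx
  have hpow_sum : ∑' j, (∫⁻ x, φ x * ψ (x - e j) ∂μ) ^ r ≤ A ^ r * ∫⁻ x, φ x ^ r ∂μ := calc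
    ∑' j, (∫⁻ x, φ x * ψ (x - e j) ∂μ) ^ r
        ≤ ∑' j, (∫⁻ x, φ x ^ r * ψ (x - e j) ∂μ) * A ^ (r - 1) := by
      refine ENNReal.tsum_le_tsum fun j => (lintegral_mul_rpow_le hφ.aemeasurable
        (hψj j).aemeasurable hr).trans ?_
      rw [lintegral_sub_right_eq_self ψ (e j)]
      gcongr
    _ = (∫⁻ x, φ x ^ r * ∑' j, ψ (x - e j) ∂μ) * A ^ (r - 1) := by
      simp only [ENNReal.tsum_mul_left.symm]
      rw [ENNReal.tsum_mul_right, lintegral_tsum (f := fun j x => φ x ^ r * ψ (x - e j)) fun j =>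
        ((hφ.pow_const r).mul (hψj j)).aemeasurable]
    _ ≤ (∫⁻ x, φ x ^ r * A ∂μ) * A ^ (r - 1) := by
      gcongr ?_ * _
      exact lintegral_mono_ae (hsum_le.mono fun x hx => by gcongr)
    _ = A ^ r * ∫⁻ x, φ x ^ r ∂μ := by
      have hA_pow : A ^ (r - 1) * A = A ^ r := by
        conv_rhs => rw [← sub_add_cancel r 1,
          ENNReal.rpow_add_of_nonneg _ _ (by linarith) zero_le_one, ENNReal.rpow_one]
      rw [lintegral_mul_const _ (hφ.pow_const r), ← hA_pow]
      ring
  calc (∑' j, (∫⁻ x, φ x * ψ (x - e j) ∂μ) ^ r) ^ (1 / r)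
      ≤ (A ^ r * ∫⁻ x, φ x ^ r ∂μ) ^ (1 / r) := by gcongr
    _ = (∫⁻ x, φ x ^ r ∂μ) ^ (1 / r) * A := by
      rw [ENNReal.mul_rpow_of_nonneg _ _ (by positivity), ← ENNReal.rpow_mul,
        mul_one_div_cancel hr0.ne', ENNReal.rpow_one, mul_comm]

end Lattice

lemma existsUnique_sub_intCast_mem_Ico (x : ℝ) : ∃! k : ℤ, x - k ∈ Set.Ico (0 : ℝ) 1 :=
  ⟨⌊x⌋, ⟨Int.fract_nonneg x, Int.fract_lt_one x⟩, fun k hk =>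
    (Int.floor_eq_iff.2 ⟨by linarith [hk.1], by linarith [hk.2]⟩).symm⟩

lemma existsUnique_sub_zcast_mem_pi_Ico {d : ℕ} (x : Rd d) :
    ∃! k : Zd d, x - zcast k ∈ Set.univ.pi fun _ => Set.Ico (0 : ℝ) 1 := by
  choose k hk huniq using fun i => existsUnique_sub_intCast_mem_Ico (x i)
  exact ⟨k, fun i _ => hk i, fun k' hk' => funext fun i => huniq i (k' i) (hk' i trivial)⟩

lemma volume_pi_Ico_zero_one (d : ℕ) :
    volume (Set.univ.pi fun _ : Fin d => Set.Ico (0 : ℝ) 1) = 1 := by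
  simp [volume_pi_pi, Real.volume_Ico]

lemma pi_Ico_subset_cube (d : ℕ) : (Set.univ.pi fun _ : Fin d => Set.Ico (0 : ℝ) 1) ⊆ cube d := by
  intro x hx
  rw [cube, ← Set.pi_univ_Icc]
  exact fun i _ => Set.Ico_subset_Icc_self (hx i trivial)

theorem dnorm_lintegral_mul_sub_intCast_le {p : ℝ≥0∞} (hp : 1 ≤ p) {φ ψ : ℝ → ℝ≥0∞}
    (hφ : Measurable φ) (hψ : Measurable ψ) :
    dnorm p (fun j : ℤ => ∫⁻ x, φ x * ψ (x - j)) ≤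
      mnorm p volume φ * mnorm ∞ (volume.restrict (Set.Icc 0 1)) fun u => ∑' k : ℤ, ψ (u + k) := by
  rw [mnorm_top]
  exact dnorm_lintegral_mul_sub_le (e := Int.castAddHom ℝ) measurableSet_Ico
    (by simp [Real.volume_Ico]) existsUnique_sub_intCast_mem_Ico hp hφ hψ
    (ae_restrict_of_ae_restrict_of_subset Set.Ico_subset_Icc_self (ENNReal.ae_le_essSup _))

theorem dnorm_lintegral_mul_sub_zcast_le {d : ℕ} {q : ℝ≥0∞} (hq : 1 ≤ q) {φ ψ : Rd d → ℝ≥0∞}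
    (hφ : Measurable φ) (hψ : Measurable ψ) :
    dnorm q (fun j : Zd d => ∫⁻ x, φ x * ψ (x - zcast j)) ≤
      mnorm q volume φ * mnorm ∞ (volume.restrict (cube d)) (fun u => ∑' k, ψ (u + zcast k)) := by
  rw [mnorm_top]
  exact dnorm_lintegral_mul_sub_le (e := (Int.castAddHom ℝ).compLeft (Fin d))
    (MeasurableSet.univ_pi fun _ => measurableSet_Ico) (volume_pi_Ico_zero_one d)
    existsUnique_sub_zcast_mem_pi_Ico hq hφ hψ
    (ae_restrict_of_ae_restrict_of_subset (pi_Ico_subset_cube d) (ENNReal.ae_le_essSup _))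

theorem dnorm_enorm_integral_mul_sub_zcast_le {d : ℕ} {q : ℝ≥0∞} (hq : 1 ≤ q)
    {f g : ℝ × Rd d → ℂ} (hf : Measurable f) (hg : Measurable g) (s : ℝ) :
    dnorm q (fun j : Zd d => ‖∫ x : ℝ × Rd d, f x * g (x.1 - s, x.2 - zcast j)‖ₑ) ≤
      ∫⁻ x₁, mnorm q volume (fun x₂ => ‖f (x₁, x₂)‖ₑ) *
        mnorm ∞ (volume.restrict (cube d)) (fun x₂ => ∑' k, ‖g (x₁ - s, x₂ + zcast k)‖ₑ) := by
  have hprod : ∀ j : Zd d, Measurable fun x : ℝ × Rd d =>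
      ‖f x‖ₑ * ‖g (x.1 - s, x.2 - zcast j)‖ₑ := fun j =>
    hf.enorm.mul (hg.enorm.comp ((measurable_fst.sub_const _).prodMk (measurable_snd.sub_const _)))
  calc _ ≤ dnorm q fun j : Zd d => ∫⁻ x₁, ∫⁻ x₂, ‖f (x₁, x₂)‖ₑ * ‖g (x₁ - s, x₂ - zcast j)‖ₑ :=
        dnorm_mono fun j => by
          rw [← lintegral_prod _ (hprod j).aemeasurable, ← Measure.volume_eq_prod]
          simpa only [enorm_mul] using enorm_integral_le_lintegral_enorm
            fun x : ℝ × Rd d => f x * g (x.1 - s, x.2 - zcast j)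
    _ ≤ ∫⁻ x₁, dnorm q fun j : Zd d => ∫⁻ x₂, ‖f (x₁, x₂)‖ₑ * ‖g (x₁ - s, x₂ - zcast j)‖ₑ :=
        dnorm_lintegral_le_lintegral_dnorm hq fun j => (hprod j).lintegral_prod_right'
    _ ≤ _ := lintegral_mono fun x₁ =>
        dnorm_lintegral_mul_sub_zcast_le (φ := fun x₂ => ‖f (x₁, x₂)‖ₑ)
          (ψ := fun x₂ => ‖g (x₁ - s, x₂)‖ₑ) hq (hf.enorm.comp measurable_prodMk_left)
          (hg.enorm.comp measurable_prodMk_left)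

theorem stmt3_general {d : ℕ} (p q : ℝ≥0∞) (hp : 1 ≤ p) (hq : 1 ≤ q)
    (f g : ℝ × Rd d → ℂ) (hf : Measurable f) (hg : Measurable g) :
    lpq p q (fun j : ℤ × Zd d =>
        ∫ x : ℝ × Rd d, f x * g (x.1 - (j.1:ℝ), x.2 - zcast j.2))
      ≤ mixedLpq p q f * amal ∞ ∞ g := by
  let F : ℝ → ℝ≥0∞ := fun x₁ => mnorm q volume fun x₂ => ‖f (x₁, x₂)‖ₑ
  let G : ℝ → ℝ≥0∞ := fun t => mnorm ∞ (volume.restrict (cube d)) fun x₂ =>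
    ∑' k : Zd d, ‖g (t, x₂ + zcast k)‖ₑ
  have hG : Measurable G := (Measurable.tsum fun k =>
    hg.enorm.comp (measurable_fst.prodMk (measurable_snd.add_const _))).mnorm_prod_right ∞
  calc _ ≤ dnorm p fun j₁ : ℤ => ∫⁻ x₁, F x₁ * G (x₁ - j₁) :=
        dnorm_mono fun j₁ => dnorm_enorm_integral_mul_sub_zcast_le hq hf hg j₁
    _ ≤ mnorm p volume F * mnorm ∞ (volume.restrict (Set.Icc 0 1)) fun u => ∑' k : ℤ, G (u + k) :=
        dnorm_lintegral_mul_sub_intCast_le hp (hf.enorm.mnorm_prod_right q) hG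
    _ = mixedLpq p q f * amal ∞ ∞ g := rfl

/-- Lemma 2.6: the sampling inequality
`‖(⟨f, g(·−j₁,·−j₂)⟩)_{j}‖_{ℓ^{p,q}} ≤ ‖f‖_{L^{p,q}} ‖g‖_{𝓛^{∞,∞}}`. -/
theorem stmt3 {d : ℕ} (p q : ℝ≥0∞) (hp : 1 ≤ p) (hq : 1 ≤ q)
    (f g : ℝ × Rd d → ℂ) (hf : Measurable f) (hg : Measurable g)
    (hfL : mixedLpq p q f ≠ ∞) (hgA : amal ∞ ∞ g ≠ ∞) :
    lpq p q (fun j : ℤ × Zd d =>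
        ∫ x : ℝ × Rd d, f x * g (x.1 - (j.1:ℝ), x.2 - zcast j.2))
      ≤ mixedLpq p q f * amal ∞ ∞ g :=
  stmt3_general p q hp hq f g hf hg
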